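/- Let V be a finite-dimensional real vector space, let g : V → V* be the map associated to a symmetric positive-definite bilinear form on V, and let b : V → V* be the map associated to a skew-symmetric bilinear form on V. Define the endomorphism G of V ⊕ V* by G(X+ξ) = (−g⁻¹(bX) + g⁻¹ξ) + ((g − b g⁻¹ b)X + b g⁻¹ ξ). Then G² = 1, G is self-adjoint with respect to the canonical symmetric bilinear form on V ⊕ V*, and the +1-eigenspace of G is the graph C₊ = {X + (b+g)X : X ∈ V} while the −1-eigenspace is the graph C₋ = {X + (b−g)X : X ∈ V}; moreover the canonical bilinear form is positive definite on C₊ and negative definite on C₋. -/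

import Mathlib

open Module

/-- The canonical symmetric bilinear form on `V ⊕ V*`,
`⟨X+ξ, Y+η⟩ = (1/2)(ξ(Y) + η(X))`. -/
noncomputable def canForm (V : Type*) [AddCommGroup V] [Module ℝ V] :
    LinearMap.BilinForm ℝ (V × Module.Dual ℝ V) :=
  LinearMap.mk₂ ℝ (fun p q => (p.2 q.1 + q.2 p.1) / 2)
    (fun p p' q => by simp; ring)
    (fun c p q => by simp; ring)
    (fun p q q' => by simp; ring)
    (fun c p q => by simp; ring)

/-- The generalized metric `G(X+ξ) = (−g⁻¹bX + g⁻¹ξ) + ((g − bg⁻¹b)X + bg⁻¹ξ)`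
on `V ⊕ V*` determined by a metric `g` and a 2-form `b`. -/
noncomputable def genMetric {V : Type*} [AddCommGroup V] [Module ℝ V]
    (g b : V →ₗ[ℝ] Module.Dual ℝ V) (ginv : Module.Dual ℝ V →ₗ[ℝ] V) :
    (V × Module.Dual ℝ V) →ₗ[ℝ] (V × Module.Dual ℝ V) :=
  LinearMap.prod
    (ginv ∘ₗ LinearMap.snd ℝ V (Module.Dual ℝ V) -
      ginv ∘ₗ b ∘ₗ LinearMap.fst ℝ V (Module.Dual ℝ V))
    (g ∘ₗ LinearMap.fst ℝ V (Module.Dual ℝ V) -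
      b ∘ₗ ginv ∘ₗ b ∘ₗ LinearMap.fst ℝ V (Module.Dual ℝ V) +
      b ∘ₗ ginv ∘ₗ LinearMap.snd ℝ V (Module.Dual ℝ V))

/-- The generalized metric `G` built from a positive-definite symmetric form `g`
and a skew form `b` squares to the identity, is self-adjoint for the canonical
bilinear form, has `±1`-eigenspaces the graphs `C_±` of `b ± g`, and the
canonical form is positive definite on `C₊` and negative definite on `C₋`. -/
theorem genMetric_properties
    (V : Type*) [AddCommGroup V] [Module ℝ V] [FiniteDimensional ℝ V]
    (g b : V →ₗ[ℝ] Module.Dual ℝ V)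
    (hgsymm : ∀ x y : V, g x y = g y x)
    (hgpos : ∀ x : V, x ≠ 0 → 0 < g x x)
    (hbskew : ∀ x y : V, b x y = - b y x)
    (ginv : Module.Dual ℝ V →ₗ[ℝ] V)
    (hginv₁ : ginv ∘ₗ g = LinearMap.id) (hginv₂ : g ∘ₗ ginv = LinearMap.id) :
    genMetric g b ginv ∘ₗ genMetric g b ginv = LinearMap.id ∧
    (∀ p q : V × Module.Dual ℝ V,
      canForm V (genMetric g b ginv p) q = canForm V p (genMetric g b ginv q)) ∧
    Module.End.eigenspace (genMetric g b ginv) 1 = LinearMap.graph (b + g) ∧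
    Module.End.eigenspace (genMetric g b ginv) (-1) = LinearMap.graph (b - g) ∧
    (∀ p ∈ LinearMap.graph (b + g), p ≠ 0 → 0 < canForm V p p) ∧
    (∀ p ∈ LinearMap.graph (b - g), p ≠ 0 → canForm V p p < 0) := by

  have h1 : ∀ x : V, ginv (g x) = x := fun x => LinearMap.congr_fun hginv₁ x
  have h2 : ∀ ξ : Module.Dual ℝ V, g (ginv ξ) = ξ := fun ξ => LinearMap.congr_fun hginv₂ ξ
  have hb0 : ∀ x : V, b x x = 0 := by
    intro x; have := hbskew x x; linarith
  refine ⟨?_, ?_, ?_, ?_, ?_, ?_⟩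
  · ext p <;>
      simp [genMetric, h1, h2, map_add, map_sub] <;> abel
  · intro p q
    simp [genMetric, canForm, h1, h2]
    have key : ∀ (ξ η : Module.Dual ℝ V), ξ (ginv η) = η (ginv ξ) := by
      intro ξ η
      have := hgsymm (ginv ξ) (ginv η)
      rwa [h2, h2] at this
    have hs := hgsymm p.1 q.1
    have h4 := hbskew (ginv q.2) p.1
    have h5 := hbskew (ginv p.2) q.1
    have h6 := hbskew (ginv (b p.1)) q.1
    have h7 := hbskew (ginv (b q.1)) p.1
    have f1 := key q.2 p.2
    have f2 := key q.2 (b p.1)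
    have f3 := key p.2 (b q.1)
    have f4 := key (b q.1) (b p.1)
    linarith
  · ext ⟨x, ξ⟩
    rw [Module.End.mem_eigenspace_iff, LinearMap.mem_graph_iff]
    simp only [genMetric, LinearMap.prod_apply, LinearMap.coe_comp, Function.comp_apply,
      LinearMap.sub_apply, LinearMap.add_apply, LinearMap.fst_apply, LinearMap.snd_apply,
      Function.prod, one_smul, Prod.mk.injEq, Prod.smul_mk]
    constructor
    · rintro ⟨ha, hb'⟩
      have h' : g (ginv ξ - ginv (b x)) = g x := by rw [ha]
      rw [map_sub, h2, h2] at h'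
      have h'' : ξ = b x + g x := by rw [← h']; abel
      simpa [LinearMap.add_apply] using h''
    · intro hξ
      have hξ' : ξ = b x + g x := by simpa using hξ
      subst hξ'
      refine ⟨?_, ?_⟩ <;> simp [h1, map_add, map_sub] <;> abel
  · ext ⟨x, ξ⟩
    rw [Module.End.mem_eigenspace_iff, LinearMap.mem_graph_iff]
    simp only [genMetric, LinearMap.prod_apply, LinearMap.coe_comp, Function.comp_apply,
      LinearMap.sub_apply, LinearMap.add_apply, LinearMap.fst_apply, LinearMap.snd_apply,
      Function.prod, neg_smul, one_smul, Prod.mk.injEq, Prod.smul_mk, Prod.neg_mk]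
    constructor
    · rintro ⟨ha, hb'⟩
      have h' : g (ginv ξ - ginv (b x)) = g (-x) := by rw [ha]
      rw [map_sub, h2, h2, map_neg] at h'
      rw [sub_eq_iff_eq_add] at h'
      have h'' : ξ = b x - g x := by rw [h']; abel
      simpa [LinearMap.sub_apply] using h''
    · intro hξ
      have hξ' : ξ = b x - g x := by simpa using hξ
      subst hξ'
      refine ⟨?_, ?_⟩ <;> simp [h1, map_add, map_sub] <;> abel
  · rintro ⟨x, ξ⟩ hp hne
    rw [LinearMap.mem_graph_iff] at hp
    simp only at hp
    have hx : x ≠ 0 := by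
      rintro rfl; apply hne; simp at hp; simp [hp]
    subst hp
    have := hgpos x hx
    simp [canForm, hb0 x]
    linarith
  · rintro ⟨x, ξ⟩ hp hne
    rw [LinearMap.mem_graph_iff] at hp
    simp only at hp
    have hx : x ≠ 0 := by
      rintro rfl; apply hne; simp at hp; simp [hp]
    subst hp
    have := hgpos x hx
    simp [canForm, hb0 x]
    linarith
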